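/- The commuting-diagram property for the dialectica interpretation: for every intuitionistic formula A, |A*|^x_y = (A_D(x;y))*, i.e., the affine interpretation (with |!A|^x_y := !|A|^x_y) of the simplified ∗-translation of A equals the ∗-translation of the Gödel dialectica interpretation of A. -/

import Mathlib

/-- Formulas of intuitionistic predicate logic (HOAS quantifiers over arbitrary types). -/
inductive IForm : Type 1 where
  | atom : Prop → IForm
  | and  : IForm → IForm → IForm
  | or   : IForm → IForm → IForm
  | imp  : IForm → IForm → IForm
  | all  : {τ : Type} → (τ → IForm) → IForm
  | ex   : {τ : Type} → (τ → IForm) → IForm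

/-- Formulas of intuitionistic affine logic. -/
inductive AForm : Type 1 where
  | atom   : Prop → AForm
  | tensor : AForm → AForm → AForm
  | oplus  : AForm → AForm → AForm
  | limp   : AForm → AForm → AForm
  | bang   : AForm → AForm
  | all    : {τ : Type} → (τ → AForm) → AForm
  | ex     : {τ : Type} → (τ → AForm) → AForm

mutual
/-- Witness types of Gödel's dialectica interpretation. -/
def DW : IForm → Type
  | .atom _ => PUnit
  | .and A B => DW A × DW B
  | .or A B => DW A × DW B × Bool
  | .imp A B => (DW A → DW B) × (DW A → DC B → DC A)
  | .all Φ => ∀ a, DW (Φ a)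
  | .ex Φ => (a : _) × DW (Φ a)

/-- Challenge types of Gödel's dialectica interpretation. -/
def DC : IForm → Type
  | .atom _ => PUnit
  | .and A B => DC A × DC B
  | .or A B => DC A × DC B
  | .imp A B => DW A × DC B
  | .all Φ => (a : _) × DC (Φ a)
  | .ex Φ => ∀ a, DC (Φ a)
end

/-- `(b = true → X) ∧ (b = false → Y)` as an intuitionistic formula. -/
def ipcond (b : Bool) (X Y : IForm) : IForm :=
  ((IForm.atom (b = true)).imp X).and ((IForm.atom (b = false)).imp Y)

/-- Gödel's dialectica interpretation `A_D(x; y)`, formula-valued. -/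
def dial : (A : IForm) → DW A → DC A → IForm
  | .atom P, _, _ => .atom P
  | .and A B, x, y => (dial A x.1 y.1).and (dial B x.2 y.2)
  | .or A B, x, y => ipcond x.2.2 (dial A x.1 y.1) (dial B x.2.1 y.2)
  | .imp A B, f, c => (dial A c.1 (f.2 c.1 c.2)).imp (dial B (f.1 c.1) c.2)
  | .all Φ, f, c => dial (Φ c.1) (f c.1) c.2
  | .ex Φ, x, c => dial (Φ x.1) x.2 (c x.1)

/-- The simplified Girard ∗-translation (no bang on disjuncts/existentials). -/
def starS : IForm → AForm
  | .atom P => AForm.atom P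
  | .and A B => (starS A).tensor (starS B)
  | .or A B => (starS A).oplus (starS B)
  | .imp A B => ((starS A).bang).limp (starS B)
  | .all Φ => AForm.all fun a => starS (Φ a)
  | .ex Φ => AForm.ex fun a => starS (Φ a)

mutual
/-- Witness types of the parametrised interpretation of affine logic,
with the dialectica interpretation of `!`. -/
def AWg : AForm → Type
  | .atom _ => PUnit
  | .tensor A B => AWg A × AWg B
  | .oplus A B => AWg A × AWg B × Bool
  | .limp A B => (AWg A → AWg B) × (AWg A → ACg B → ACg A)
  | .bang A => AWg A
  | .all Φ => ∀ a, AWg (Φ a)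
  | .ex Φ => (a : _) × AWg (Φ a)

/-- Challenge types of the parametrised interpretation of affine logic,
with the dialectica interpretation of `!`. -/
def ACg : AForm → Type
  | .atom _ => PUnit
  | .tensor A B => ACg A × ACg B
  | .oplus A B => ACg A × ACg B
  | .limp A B => AWg A × ACg B
  | .bang A => ACg A
  | .all Φ => (a : _) × ACg (Φ a)
  | .ex Φ => ∀ a, ACg (Φ a)
end

/-- `(!(b = true) ⊸ X) ⊗ (!(b = false) ⊸ Y)` as an affine formula. -/
def apcond (b : Bool) (X Y : AForm) : AForm :=
  (((AForm.atom (b = true)).bang).limp X).tensor (((AForm.atom (b = false)).bang).limp Y)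

/-- The formula-valued parametrised interpretation `|A|^x_y` of affine logic,
with the dialectica choice `|!A|^x_y := ! |A|^x_y`. -/
def aintG : (A : AForm) → AWg A → ACg A → AForm
  | .atom P, _, _ => .atom P
  | .tensor A B, x, y => (aintG A x.1 y.1).tensor (aintG B x.2 y.2)
  | .oplus A B, x, y => apcond x.2.2 (aintG A x.1 y.1) (aintG B x.2.1 y.2)
  | .limp A B, f, c => (aintG A c.1 (f.2 c.1 c.2)).limp (aintG B (f.1 c.1) c.2)
  | .bang A, x, y => .bang (aintG A x y)
  | .all Φ, f, c => aintG (Φ c.1) (f c.1) c.2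
  | .ex Φ, x, c => aintG (Φ x.1) x.2 (c x.1)

/-- Transport of dialectica witnesses/challenges to those of the
interpretation of the simplified ∗-translation, and back. -/
def gTrans : (A : IForm) →
    (DW A → AWg (starS A)) × (AWg (starS A) → DW A) ×
    (DC A → ACg (starS A)) × (ACg (starS A) → DC A)
  | .atom _ => (fun x => x, fun x => x, fun y => y, fun y => y)
  | .and A B =>
      (fun x => ((gTrans A).1 x.1, (gTrans B).1 x.2),
       fun x => ((gTrans A).2.1 x.1, (gTrans B).2.1 x.2),
       fun y => ((gTrans A).2.2.1 y.1, (gTrans B).2.2.1 y.2),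
       fun y => ((gTrans A).2.2.2 y.1, (gTrans B).2.2.2 y.2))
  | .or A B =>
      (fun x => ((gTrans A).1 x.1, (gTrans B).1 x.2.1, x.2.2),
       fun x => ((gTrans A).2.1 x.1, (gTrans B).2.1 x.2.1, x.2.2),
       fun y => ((gTrans A).2.2.1 y.1, (gTrans B).2.2.1 y.2),
       fun y => ((gTrans A).2.2.2 y.1, (gTrans B).2.2.2 y.2))
  | .imp A B =>
      (fun f => (fun x => (gTrans B).1 (f.1 ((gTrans A).2.1 x)),
                 fun x w => (gTrans A).2.2.1 (f.2 ((gTrans A).2.1 x) ((gTrans B).2.2.2 w))),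
       fun f => (fun x => (gTrans B).2.1 (f.1 ((gTrans A).1 x)),
                 fun x w => (gTrans A).2.2.2 (f.2 ((gTrans A).1 x) ((gTrans B).2.2.1 w))),
       fun c => ((gTrans A).1 c.1, (gTrans B).2.2.1 c.2),
       fun c => ((gTrans A).2.1 c.1, (gTrans B).2.2.2 c.2))
  | .all Φ =>
      (fun f => fun a => (gTrans (Φ a)).1 (f a),
       fun f => fun a => (gTrans (Φ a)).2.1 (f a),
       fun c => ⟨c.1, (gTrans (Φ c.1)).2.2.1 c.2⟩,
       fun c => ⟨c.1, (gTrans (Φ c.1)).2.2.2 c.2⟩)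
  | .ex Φ =>
      (fun x => ⟨x.1, (gTrans (Φ x.1)).1 x.2⟩,
       fun x => ⟨x.1, (gTrans (Φ x.1)).2.1 x.2⟩,
       fun c => fun a => (gTrans (Φ a)).2.2.1 (c a),
       fun c => fun a => (gTrans (Φ a)).2.2.2 (c a))

theorem gTrans_rt (A : IForm) :
    (∀ x, (gTrans A).2.1 ((gTrans A).1 x) = x) ∧
    (∀ y, (gTrans A).2.2.2 ((gTrans A).2.2.1 y) = y) := by
  induction A with
  | atom P => exact ⟨fun _ => rfl, fun _ => rfl⟩
  | and A B ihA ihB =>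
    exact ⟨fun x => by simp [gTrans, ihA.1, ihB.1]; rfl,
           fun y => by simp [gTrans, ihA.2, ihB.2]; rfl⟩
  | or A B ihA ihB =>
    exact ⟨fun x => by simp [gTrans, ihA.1, ihB.1]; rfl,
           fun y => by simp [gTrans, ihA.2, ihB.2]; rfl⟩
  | imp A B ihA ihB =>
    refine ⟨fun f => ?_, fun y => by simp [gTrans, ihA.1, ihB.2]; rfl⟩
    simp only [gTrans]
    obtain ⟨f1, f2⟩ := (f : (DW A → DW B) × (DW A → DC B → DC A))
    refine Prod.ext ?_ ?_
    · funext x; simp [ihA.1, ihB.1]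
    · funext x w; simp [ihA.1, ihA.2, ihB.2]
  | all Φ ih =>
    exact ⟨fun f => by funext a; simp [gTrans, (ih a).1],
           fun c => by simp [gTrans, (ih c.1).2]; rfl⟩
  | ex Φ ih =>
    exact ⟨fun x => by simp [gTrans, (ih x.1).1]; rfl,
           fun c => by funext a; simp [gTrans, (ih a).2]⟩

/-- Commuting diagram for the dialectica interpretation: the affine
interpretation of the simplified ∗-translation of `A` is syntactically the
∗-translation of the dialectica interpretation `A_D(x; y)`. -/
theorem star_dialectica_diagram (A : IForm) (x : DW A) (y : DC A) :
    aintG (starS A) ((gTrans A).1 x) ((gTrans A).2.2.1 y) = starS (dial A x y) := by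
  induction A with
  | atom P => rfl
  | and A B ihA ihB => simp [gTrans, starS, dial, aintG, ihA, ihB]
  | or A B ihA ihB => simp [gTrans, starS, dial, aintG, apcond, ipcond, ihA, ihB]
  | imp A B ihA ihB =>
    simp [gTrans, starS, dial, aintG, (gTrans_rt A).1, (gTrans_rt B).2, ihA, ihB]
  | all Φ ih => simp [gTrans, starS, dial, aintG, ih]
  | ex Φ ih => simp [gTrans, starS, dial, aintG, ih]
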